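/- The data language L_inc = { (α,a₁)…(α,a_m)(β,b₁)…(β,b_n) : a₁,…,a_m pairwise distinct, b₁,…,b_n pairwise distinct, and {a₁,…,a_m} ⊆ {b₁,…,b_n} } is accepted by a weak 2-pebble automaton; moreover every word in L_inc satisfies m ≤ n. -/

import Mathlib

/-! Core definitions: weak pebble automata over data words. -/

inductive PAct where
  | stay | right | place | lift
deriving DecidableEq

inductive Tape (Sigma : Type) where
  | leftMarker | rightMarker | letter (σ : Sigma)

/-- The label of position `p` of the padded input `⊲ w ⊳` (positions `1..n` carry
the letters of `w`, position `0` the left-end marker, positions `> n` the right-end marker). -/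
def labelAt {Sigma D : Type} (w : List (Sigma × D)) (p : ℕ) : Tape Sigma :=
  if p = 0 then Tape.leftMarker
  else
    match w[p - 1]? with
    | some x => Tape.letter x.1
    | none => Tape.rightMarker

/-- The data value of position `p` (markers carry no data value). -/
def dataAt {Sigma D : Type} (w : List (Sigma × D)) (p : ℕ) : Option D :=
  if p = 0 then none else (w[p - 1]?).map Prod.snd

/-- A (one-way, alternating) weak `k`-pebble automaton over the alphabet `Sigma`.
Pebbles are numbered from `k` down to `1`; pebble `i` being the head pebble.
A transition `(i, σ, V, q) → (p, act)` is represented by `δ i σ V q p act`. -/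
structure WeakPA (Sigma : Type) (k : ℕ) where
  Q : Type
  finQ : Fintype Q
  q0 : Q
  F : Set Q
  U : Set Q
  δ : ℕ → Tape Sigma → Set ℕ → Q → Q → PAct → Prop

namespace WeakPA

variable {Sigma D : Type} {k : ℕ}

/-- A configuration `(i, q, θ)`: head pebble `i`, current state `q`,
pebble assignment `θ` (meaningful on pebbles `i,…,k`). -/
abbrev Config (A : WeakPA Sigma k) : Type := ℕ × A.Q × (ℕ → ℕ)

/-- The set `V = { l : l > i, l ≤ k, pebble l sees the same data value as pebble i }`. -/
def eqSet (w : List (Sigma × D)) (k i : ℕ) (θ : ℕ → ℕ) : Set ℕ :=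
  {l | i < l ∧ l ≤ k ∧ (dataAt w (θ l)).isSome ∧ dataAt w (θ l) = dataAt w (θ i)}

/-- One step of the weak `k`-PA `A` on the input word `w`. -/
def step (A : WeakPA Sigma k) (w : List (Sigma × D)) :
    A.Config → A.Config → Prop := fun c c' =>
  1 ≤ c.1 ∧ c.1 ≤ k ∧
  (∀ j, j ≠ c.1 → j ≠ c.1 - 1 → c'.2.2 j = c.2.2 j) ∧
  ∃ act : PAct,
    A.δ c.1 (labelAt w (c.2.2 c.1)) (eqSet w k c.1 c.2.2) c.2.1 c'.2.1 act ∧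
    match act with
    | PAct.stay =>
        c'.1 = c.1 ∧ c'.2.2 c.1 = c.2.2 c.1 ∧ c'.2.2 (c.1 - 1) = c.2.2 (c.1 - 1)
    | PAct.right =>
        c'.1 = c.1 ∧ c'.2.2 c.1 = c.2.2 c.1 + 1 ∧ c'.2.2 (c.1 - 1) = c.2.2 (c.1 - 1)
    | PAct.lift =>
        c'.1 = c.1 + 1 ∧ c'.2.2 c.1 = c.2.2 c.1 ∧ c'.2.2 (c.1 - 1) = c.2.2 (c.1 - 1)
    | PAct.place =>
        2 ≤ c.1 ∧ c'.1 = c.1 - 1 ∧ c'.2.2 c.1 = c.2.2 c.1 ∧ c'.2.2 (c.1 - 1) = c.2.2 c.1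

/-- The alternating "leads to acceptance" semantics. -/
inductive Leads (A : WeakPA Sigma k) (w : List (Sigma × D)) : A.Config → Prop where
  | final {c : A.Config} : c.2.1 ∈ A.F → Leads A w c
  | univ {c : A.Config} : c.2.1 ∈ A.U →
      (∀ c', A.step w c c' → Leads A w c') → Leads A w c
  | exist {c c' : A.Config} : c.2.1 ∉ A.F → c.2.1 ∉ A.U →
      A.step w c c' → Leads A w c' → Leads A w c

/-- The initial configuration: pebble `k` on the left-end marker in the initial state. -/
def initConfig (A : WeakPA Sigma k) : A.Config := (k, A.q0, fun _ => 0)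

def Accepts (A : WeakPA Sigma k) (w : List (Sigma × D)) : Prop :=
  A.Leads w A.initConfig

/-- The data language of `A` over the data domain `D`. -/
def Lang (A : WeakPA Sigma k) (D : Type) : Set (List (Sigma × D)) :=
  {w | A.Accepts w}

/-- A weak PA is nondeterministic if it has no universal states. -/
def Nondeterministic (A : WeakPA Sigma k) : Prop := A.U = ∅

/-- A weak PA is deterministic (over data domain `D`) if it is nondeterministic and
exactly one transition applies to each configuration. -/
def Deterministic (A : WeakPA Sigma k) (D : Type) : Prop :=
  A.U = ∅ ∧ ∀ (w : List (Sigma × D)) (c : A.Config),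
    1 ≤ c.1 → c.1 ≤ k → ∃! c', A.step w c c'

/-- Top view weak PA: the head pebble `i` may test data equality only with
pebble `i+1`, i.e. every transition has `V = ∅` or `V = {i+1}`. -/
def TopView (A : WeakPA Sigma k) : Prop :=
  ∀ i t V q q' a, A.δ i t V q q' a → V = ∅ ∨ V = {i + 1}

/-- The states `U` of universal states are required to be disjoint from `F`. -/
def WellFormed (A : WeakPA Sigma k) : Prop := ∀ q ∈ A.U, q ∉ A.F

end WeakPA

/-- The data language `L_inc` over the two-letter alphabet `{α, β}` (here `Bool`,
with `false` playing the role of `α` and `true` of `β`): an `α`-block with pairwise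
distinct data values followed by a `β`-block with pairwise distinct data values,
every data value of the `α`-block occurring in the `β`-block. -/
def Linc (D : Type) : Set (List (Bool × D)) :=
  {w | ∃ u v : List D,
    w = (u.map fun a => (false, a)) ++ (v.map fun b => (true, b)) ∧
    u.Nodup ∧ v.Nodup ∧ ∀ a ∈ u, a ∈ v}

/-! The automaton checks the three conditions of `L_inc` one position of pebble 2 at a time.
At an `α`-position carrying `a`, pebble 1 walks right to the first later position carrying `a`
and insists that it is a `β`-position: this says at once that `a` does not recur in the `α`-block
and that it occurs in the `β`-block. At a `β`-position pebble 1 checks that the rest of the word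
is `β`-labelled and avoids its datum. Soundness is an invariant, read backwards along an accepting
run, stating what each state knows about the suffix under pebble 2; completeness builds the run
by induction on that suffix. -/

section Positions

variable {Sigma D : Type} {w : List (Sigma × D)} {r p : ℕ}

lemma labelAt_succ_of_drop_eq_cons {x : Sigma × D} {y : List (Sigma × D)}
    (h : w.drop r = x :: y) :
    labelAt w (r + 1) = .letter x.1 ∧ dataAt w (r + 1) = some x.2 := by
  have hx : w[r]? = some x := by rw [← List.head?_drop, h]; rfl
  simp [labelAt, dataAt, hx]

lemma labelAt_succ_of_drop_eq_nil (h : w.drop r = []) :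
    labelAt w (r + 1) = .rightMarker := by
  have hx : w[r]? = none := List.getElem?_eq_none_iff.2 (List.drop_eq_nil_iff.1 h)
  simp [labelAt, hx]

lemma drop_succ_of_drop_eq_cons {x : Sigma × D} {y : List (Sigma × D)}
    (h : w.drop r = x :: y) : w.drop (r + 1) = y := by
  rw [← List.tail_drop, h]; rfl

lemma eq_zero_of_labelAt_eq_leftMarker (h : labelAt w p = .leftMarker) : p = 0 := by
  by_contra hp
  obtain ⟨r, rfl⟩ := Nat.exists_eq_succ_of_ne_zero hp
  cases hd : w.drop r with
  | nil => simp [labelAt_succ_of_drop_eq_nil hd] at h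
  | cons x y => simp [(labelAt_succ_of_drop_eq_cons hd).1] at h

lemma exists_drop_eq_cons_of_labelAt_eq_letter {b : Sigma} (h : labelAt w p = .letter b) :
    ∃ d, w.drop (p - 1) = (b, d) :: w.drop p ∧ dataAt w p = some d := by
  obtain ⟨r, rfl⟩ : ∃ r, p = r + 1 :=
    Nat.exists_eq_succ_of_ne_zero fun hp => by simp [hp, labelAt] at h
  cases hd : w.drop r with
  | nil => simp [labelAt_succ_of_drop_eq_nil hd] at h
  | cons x y =>
    obtain ⟨hlabel, hdata⟩ := labelAt_succ_of_drop_eq_cons hd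
    rw [hlabel, Tape.letter.injEq] at h
    exact ⟨x.2, by simp [hd, drop_succ_of_drop_eq_cons hd, ← h], hdata⟩

lemma drop_pred_eq_nil_of_labelAt_eq_rightMarker (h : labelAt w p = .rightMarker) :
    w.drop (p - 1) = [] := by
  obtain ⟨r, rfl⟩ : ∃ r, p = r + 1 :=
    Nat.exists_eq_succ_of_ne_zero fun hp => by simp [hp, labelAt] at h
  cases hd : w.drop r with
  | nil => simpa using hd
  | cons x y => simp [(labelAt_succ_of_drop_eq_cons hd).1] at h

lemma two_mem_eqSet_iff {θ : ℕ → ℕ} :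
    2 ∈ WeakPA.eqSet w 2 1 θ ↔ (dataAt w (θ 2)).isSome ∧ dataAt w (θ 2) = dataAt w (θ 1) := by
  simp [WeakPA.eqSet]

end Positions

namespace Linc

variable {D : Type}

def blocks (u v : List D) : List (Bool × D) :=
  (u.map fun a => (false, a)) ++ (v.map fun b => (true, b))

def BetaBlock (D : Type) : Set (List (Bool × D)) :=
  {y | (∀ x ∈ y, x.1 = true) ∧ (y.map Prod.snd).Nodup}

def FirstOccIsBeta (a : D) : List (Bool × D) → Prop
  | [] => False
  | x :: y => x = (true, a) ∨ x.2 ≠ a ∧ FirstOccIsBeta a y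

lemma nil_mem : ([] : List (Bool × D)) ∈ Linc D :=
  ⟨[], [], rfl, List.nodup_nil, List.nodup_nil, by simp⟩

lemma nil_mem_betaBlock : ([] : List (Bool × D)) ∈ BetaBlock D := by
  simp [BetaBlock]

lemma cons_mem_betaBlock_iff {x : Bool × D} {y : List (Bool × D)} :
    x :: y ∈ BetaBlock D ↔ x.1 = true ∧ (∀ z ∈ y, z.2 ≠ x.2) ∧ y ∈ BetaBlock D := by
  simp only [BetaBlock, Set.mem_ofPred_eq, List.forall_mem_cons, List.map_cons, List.nodup_cons,
    List.mem_map, not_exists, not_and]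
  tauto

lemma firstOccIsBeta_map_true_iff {a : D} {v : List D} :
    FirstOccIsBeta a (v.map fun b => (true, b)) ↔ a ∈ v := by
  induction v with
  | nil => simp [FirstOccIsBeta]
  | cons b v ih =>
    by_cases hab : a = b
    · simp [FirstOccIsBeta, hab]
    · simp [FirstOccIsBeta, ih, hab, Ne.symm hab]

lemma firstOccIsBeta_blocks_iff {a : D} {u v : List D} :
    FirstOccIsBeta a (blocks u v) ↔ a ∉ u ∧ a ∈ v := by
  induction u with
  | nil => simpa [blocks] using firstOccIsBeta_map_true_iff
  | cons b u ih =>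
    rw [blocks] at ih
    simp [blocks, FirstOccIsBeta, ih, eq_comm, and_assoc]

lemma betaBlock_subset : BetaBlock D ⊆ Linc D := by
  rintro y ⟨hβ, hnodup⟩
  refine ⟨[], y.map Prod.snd, ?_, List.nodup_nil, hnodup, by simp⟩
  conv_lhs => rw [← List.map_id y]
  simp only [List.map_nil, List.nil_append, List.map_map]
  exact List.map_congr_left fun x hx => by ext <;> simp [hβ x hx]

lemma mem_betaBlock_of_cons_true_mem {b : D} {y : List (Bool × D)}
    (h : (true, b) :: y ∈ Linc D) : (true, b) :: y ∈ BetaBlock D := by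
  obtain ⟨u, v, hw, -, hv, -⟩ := h
  cases u with
  | cons a u => simp at hw
  | nil =>
    simp only [List.map_nil, List.nil_append] at hw
    rw [hw]
    exact ⟨by simp, by simpa [List.map_map] using hv⟩

lemma cons_false_mem_iff {a : D} {y : List (Bool × D)} :
    (false, a) :: y ∈ Linc D ↔ y ∈ Linc D ∧ FirstOccIsBeta a y := by
  constructor
  · rintro ⟨u, v, hw, hu, hv, huv⟩
    cases u with
    | nil => cases v <;> simp at hw
    | cons a' u =>
      simp only [List.map_cons, List.cons_append, List.cons.injEq, Prod.mk.injEq,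
        true_and] at hw
      obtain ⟨rfl, rfl⟩ := hw
      rw [List.nodup_cons] at hu
      exact ⟨⟨u, v, rfl, hu.2, hv, fun b hb => huv b (by simp [hb])⟩,
        firstOccIsBeta_blocks_iff.2 ⟨hu.1, huv a (by simp)⟩⟩
  · rintro ⟨⟨u, v, rfl, hu, hv, huv⟩, hfirst⟩
    obtain ⟨hau, hav⟩ := firstOccIsBeta_blocks_iff.1 hfirst
    exact ⟨a :: u, v, rfl, List.nodup_cons.2 ⟨hau, hu⟩, hv, by simpa [hav] using huv⟩

end Linc

namespace LincAutomaton

open Linc WeakPA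

inductive State where
  | alpha | alphaPlaced | alphaScan | alphaLifted
  | beta | betaPlaced | betaScan | betaLifted
  | accept
deriving DecidableEq

instance : Fintype State :=
  ⟨{State.alpha, .alphaPlaced, .alphaScan, .alphaLifted, .beta, .betaPlaced, .betaScan, .betaLifted,
    .accept}, fun q => by cases q <;> simp⟩

inductive Transition : ℕ → Tape Bool → Set ℕ → State → State → PAct → Prop where
  | start {V} : Transition 2 .leftMarker V .alpha .alpha .right
  | placeAlpha {V} : Transition 2 (.letter false) V .alpha .alphaPlaced .place
  | startAlpha {t V} : Transition 1 t V .alphaPlaced .alphaScan .right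
  | scanAlpha {b V} (h : 2 ∉ V) : Transition 1 (.letter b) V .alphaScan .alphaScan .right
  | foundAlpha {V} (h : 2 ∈ V) : Transition 1 (.letter true) V .alphaScan .alphaLifted .lift
  | nextAlpha {t V} : Transition 2 t V .alphaLifted .alpha .right
  | placeBetaOfAlpha {V} : Transition 2 (.letter true) V .alpha .betaPlaced .place
  | placeBeta {V} : Transition 2 (.letter true) V .beta .betaPlaced .place
  | startBeta {t V} : Transition 1 t V .betaPlaced .betaScan .right
  | scanBeta {V} (h : 2 ∉ V) : Transition 1 (.letter true) V .betaScan .betaScan .right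
  | endBeta {V} : Transition 1 .rightMarker V .betaScan .betaLifted .lift
  | nextBeta {t V} : Transition 2 t V .betaLifted .beta .right
  | acceptAlpha {V} : Transition 2 .rightMarker V .alpha .accept .stay
  | acceptBeta {V} : Transition 2 .rightMarker V .beta .accept .stay

def automaton : WeakPA Bool 2 := ⟨State, inferInstance, .alpha, {.accept}, ∅, Transition⟩

variable {D : Type} {w : List (Bool × D)}

lemma Transition.ne_accept {i t V q q' act} (h : Transition i t V q q' act) : q ≠ .accept := by
  cases h <;> nofun

lemma leads_of_step {c c' : automaton.Config} (hs : automaton.step w c c')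
    (h : automaton.Leads w c') : automaton.Leads w c :=
  have ⟨_, _, _, _, hδ, _⟩ := hs
  .exist hδ.ne_accept (Set.notMem_empty _) hs h

def placement (p₂ p₁ : ℕ) : ℕ → ℕ := fun j => if j = 2 then p₂ else if j = 1 then p₁ else 0

section Steps

variable {q q' : State} {p r : ℕ}

lemma leads_of_right₂
    (hδ : Transition 2 (labelAt w p) (eqSet w 2 2 (placement p r)) q q' .right)
    (h : automaton.Leads w (2, q', placement (p + 1) r)) :
    automaton.Leads w (2, q, placement p r) :=
  leads_of_step (c' := (2, q', placement (p + 1) r))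
    ⟨by norm_num, le_rfl, fun j h₂ _ => by simp [placement, h₂], .right, hδ, rfl, rfl, rfl⟩ h

lemma leads_of_stay₂
    (hδ : Transition 2 (labelAt w p) (eqSet w 2 2 (placement p r)) q q' .stay)
    (h : automaton.Leads w (2, q', placement p r)) :
    automaton.Leads w (2, q, placement p r) :=
  leads_of_step (c' := (2, q', placement p r))
    ⟨by norm_num, le_rfl, fun _ _ _ => rfl, .stay, hδ, rfl, rfl, rfl⟩ h

lemma leads_of_place₂
    (hδ : Transition 2 (labelAt w p) (eqSet w 2 2 (placement p r)) q q' .place)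
    (h : automaton.Leads w (1, q', placement p p)) :
    automaton.Leads w (2, q, placement p r) :=
  leads_of_step (c' := (1, q', placement p p))
    ⟨by norm_num, le_rfl, fun j h₂ h₁ => by simp [placement, h₂, show j ≠ 1 from h₁], .place,
      hδ, le_rfl, rfl, rfl, rfl⟩ h

lemma leads_of_right₁
    (hδ : Transition 1 (labelAt w r) (eqSet w 2 1 (placement p r)) q q' .right)
    (h : automaton.Leads w (1, q', placement p (r + 1))) :
    automaton.Leads w (1, q, placement p r) :=
  leads_of_step (c' := (1, q', placement p (r + 1)))
    ⟨le_rfl, by norm_num, fun j h₁ _ => by simp [placement, h₁], .right, hδ, rfl, rfl, rfl⟩ h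

lemma leads_of_lift₁
    (hδ : Transition 1 (labelAt w r) (eqSet w 2 1 (placement p r)) q q' .lift)
    (h : automaton.Leads w (2, q', placement p r)) :
    automaton.Leads w (1, q, placement p r) :=
  leads_of_step (c' := (2, q', placement p r))
    ⟨le_rfl, by norm_num, fun _ _ _ => rfl, .lift, hδ, rfl, rfl, rfl⟩ h

end Steps

section Completeness

lemma leads_betaScan {p : ℕ} (hnext : ∀ r, automaton.Leads w (2, .beta, placement (p + 1) r)) :
    ∀ r, (∀ x ∈ w.drop r, x.1 = true ∧ dataAt w p ≠ some x.2) →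
      automaton.Leads w (1, .betaScan, placement p (r + 1)) := by
  intro r
  generalize hy : w.drop r = y
  induction y generalizing r with
  | nil =>
    intro _
    refine leads_of_lift₁ ?_ (leads_of_right₂ .nextBeta (hnext (r + 1)))
    rw [labelAt_succ_of_drop_eq_nil hy]
    exact .endBeta
  | cons x y ih =>
    intro hβ
    obtain ⟨hlabel, hdata⟩ := labelAt_succ_of_drop_eq_cons hy
    obtain ⟨hx, hne⟩ := hβ x List.mem_cons_self
    refine leads_of_right₁ ?_ (ih (r + 1) (drop_succ_of_drop_eq_cons hy)
      fun z hz => hβ z (List.mem_cons_of_mem x hz))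
    rw [hlabel, hx]
    exact .scanBeta fun hmem => hne ((two_mem_eqSet_iff.1 hmem).2.trans hdata)

lemma leads_alphaScan {p : ℕ} {a : D} (hp : dataAt w p = some a)
    (hnext : ∀ r, automaton.Leads w (2, .alpha, placement (p + 1) r)) :
    ∀ r, FirstOccIsBeta a (w.drop r) → automaton.Leads w (1, .alphaScan, placement p (r + 1)) := by
  intro r
  generalize hy : w.drop r = y
  induction y generalizing r with
  | nil => nofun
  | cons x y ih =>
    obtain ⟨hlabel, hdata⟩ := labelAt_succ_of_drop_eq_cons hy
    rintro (rfl | ⟨hne, hfirst⟩)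
    · refine leads_of_lift₁ ?_ (leads_of_right₂ .nextAlpha (hnext (r + 1)))
      rw [hlabel]
      exact .foundAlpha (two_mem_eqSet_iff.2 ⟨by simp [placement, hp], hp.trans hdata.symm⟩)
    · refine leads_of_right₁ ?_ (ih (r + 1) (drop_succ_of_drop_eq_cons hy) hfirst)
      rw [hlabel]
      refine .scanAlpha fun hmem => hne ?_
      simpa [placement, hp, hdata] using (two_mem_eqSet_iff.1 hmem).2.symm

lemma leads_betaPlaced {p : ℕ} {x : Bool × D} {y : List (Bool × D)} (hy : w.drop p = x :: y)
    (hx : x :: y ∈ BetaBlock D)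
    (hnext : ∀ r, automaton.Leads w (2, .beta, placement (p + 2) r)) :
    automaton.Leads w (1, .betaPlaced, placement (p + 1) (p + 1)) := by
  obtain ⟨-, hne, hyβ⟩ := cons_mem_betaBlock_iff.1 hx
  refine leads_of_right₁ .startBeta (leads_betaScan hnext (p + 1) ?_)
  rw [drop_succ_of_drop_eq_cons hy, (labelAt_succ_of_drop_eq_cons hy).2]
  exact fun z hz => ⟨hyβ.1 z hz, by simpa [eq_comm] using hne z hz⟩

lemma leads_beta :
    ∀ p, w.drop p ∈ BetaBlock D → ∀ r, automaton.Leads w (2, .beta, placement (p + 1) r) := by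
  intro p
  generalize hy : w.drop p = y
  induction y generalizing p with
  | nil =>
    intro _ r
    refine leads_of_stay₂ ?_ (.final rfl)
    rw [labelAt_succ_of_drop_eq_nil hy]
    exact .acceptBeta
  | cons x y ih =>
    intro hx r
    obtain ⟨hxβ, -, hyβ⟩ := cons_mem_betaBlock_iff.1 hx
    refine leads_of_place₂ ?_
      (leads_betaPlaced hy hx (ih (p + 1) (drop_succ_of_drop_eq_cons hy) hyβ))
    rw [(labelAt_succ_of_drop_eq_cons hy).1, hxβ]
    exact .placeBeta

lemma leads_alpha :
    ∀ p, w.drop p ∈ Linc D → ∀ r, automaton.Leads w (2, .alpha, placement (p + 1) r) := by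
  intro p
  generalize hy : w.drop p = y
  induction y generalizing p with
  | nil =>
    intro _ r
    refine leads_of_stay₂ ?_ (.final rfl)
    rw [labelAt_succ_of_drop_eq_nil hy]
    exact .acceptAlpha
  | cons x y ih =>
    intro hx r
    obtain ⟨hlabel, hdata⟩ := labelAt_succ_of_drop_eq_cons hy
    obtain ⟨_ | _, d⟩ := x
    · obtain ⟨hy', hfirst⟩ := cons_false_mem_iff.1 hx
      rw [← drop_succ_of_drop_eq_cons hy] at hfirst
      refine leads_of_place₂ (by rw [hlabel]; exact .placeAlpha) ?_
      exact leads_of_right₁ .startAlpha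
        (leads_alphaScan hdata (ih (p + 1) (drop_succ_of_drop_eq_cons hy) hy') (p + 1) hfirst)
    · have hβ := mem_betaBlock_of_cons_true_mem hx
      refine leads_of_place₂ (by rw [hlabel]; exact .placeBetaOfAlpha) ?_
      exact leads_betaPlaced hy hβ
        (leads_beta (p + 1) (drop_succ_of_drop_eq_cons hy ▸ (cons_mem_betaBlock_iff.1 hβ).2.2))

theorem linc_subset_lang : Linc D ⊆ automaton.Lang D := by
  intro w hw
  have hinit : automaton.initConfig = ((2, .alpha, placement 0 0) : automaton.Config) := by
    ext j <;> simp [initConfig, automaton, placement]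
  change automaton.Leads w _
  rw [hinit]
  exact leads_of_right₂ .start (leads_alpha 0 hw 0)

end Completeness

section Soundness

def AlphaPending (w : List (Bool × D)) (p : ℕ) (y : List (Bool × D)) : Prop :=
  (∃ a, dataAt w p = some a ∧ FirstOccIsBeta a y) ∧ w.drop p ∈ Linc D

def BetaPending (w : List (Bool × D)) (p : ℕ) (y : List (Bool × D)) : Prop :=
  (∀ x ∈ y, x.1 = true ∧ dataAt w p ≠ some x.2) ∧ w.drop p ∈ BetaBlock D

/- Position `p ≥ 1` holds `w[p - 1]`, so the suffix from `p` is `w.drop (p - 1)`; truncated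
subtraction makes it all of `w` at `p = 0`, where the run starts. -/
def Invariant (w : List (Bool × D)) : State → ℕ → ℕ → Prop
  | .alpha, p, _ => w.drop (p - 1) ∈ Linc D
  | .alphaPlaced, p, r => AlphaPending w p (w.drop r)
  | .alphaScan, p, r => AlphaPending w p (w.drop (r - 1))
  | .alphaLifted, p, _ => w.drop p ∈ Linc D
  | .beta, p, _ => w.drop (p - 1) ∈ BetaBlock D
  | .betaPlaced, p, r => BetaPending w p (w.drop r)
  | .betaScan, p, r => BetaPending w p (w.drop (r - 1))
  | .betaLifted, p, _ => w.drop p ∈ BetaBlock D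
  | .accept, _, _ => True

variable {p r : ℕ}

lemma mem_linc_of_alphaPending (hL : labelAt w p = .letter false)
    (h : AlphaPending w p (w.drop p)) : w.drop (p - 1) ∈ Linc D := by
  obtain ⟨⟨a, hpa, hfirst⟩, hrest⟩ := h
  obtain ⟨d, hdrop, hpd⟩ := exists_drop_eq_cons_of_labelAt_eq_letter hL
  obtain rfl : d = a := Option.some_injective _ (hpd.symm.trans hpa)
  rw [hdrop]
  exact cons_false_mem_iff.2 ⟨hrest, hfirst⟩

lemma alphaPending_of_scan {b : Bool} (hL : labelAt w r = .letter b)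
    (hne : ¬((dataAt w p).isSome ∧ dataAt w p = dataAt w r))
    (h : AlphaPending w p (w.drop r)) : AlphaPending w p (w.drop (r - 1)) := by
  obtain ⟨⟨a, hpa, hfirst⟩, hrest⟩ := h
  obtain ⟨d, hdrop, hrd⟩ := exists_drop_eq_cons_of_labelAt_eq_letter hL
  refine ⟨⟨a, hpa, ?_⟩, hrest⟩
  rw [hdrop]
  exact .inr ⟨fun hda => hne ⟨by simp [hpa], by rw [hpa, hrd, ← hda]⟩, hfirst⟩

lemma alphaPending_of_found (hL : labelAt w r = .letter true)
    (heq : (dataAt w p).isSome ∧ dataAt w p = dataAt w r) (h : w.drop p ∈ Linc D) :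
    AlphaPending w p (w.drop (r - 1)) := by
  obtain ⟨d, hdrop, hrd⟩ := exists_drop_eq_cons_of_labelAt_eq_letter hL
  rw [hdrop]
  exact ⟨⟨d, heq.2.trans hrd, .inl rfl⟩, h⟩

lemma mem_betaBlock_of_betaPending (hL : labelAt w p = .letter true)
    (h : BetaPending w p (w.drop p)) : w.drop (p - 1) ∈ BetaBlock D := by
  obtain ⟨hβ, hrest⟩ := h
  obtain ⟨d, hdrop, hpd⟩ := exists_drop_eq_cons_of_labelAt_eq_letter hL
  rw [hdrop, cons_mem_betaBlock_iff]
  exact ⟨rfl, fun z hz hzd => (hβ z hz).2 (by rw [hpd, hzd]), hrest⟩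

lemma betaPending_of_scan (hL : labelAt w r = .letter true)
    (hne : ¬((dataAt w p).isSome ∧ dataAt w p = dataAt w r))
    (h : BetaPending w p (w.drop r)) : BetaPending w p (w.drop (r - 1)) := by
  obtain ⟨hβ, hrest⟩ := h
  obtain ⟨d, hdrop, hrd⟩ := exists_drop_eq_cons_of_labelAt_eq_letter hL
  refine ⟨?_, hrest⟩
  rw [hdrop, List.forall_mem_cons]
  exact ⟨⟨rfl, fun hpd => hne ⟨by simp [hpd], hpd.trans hrd.symm⟩⟩, hβ⟩

lemma invariant_of_step {c c' : automaton.Config} (hs : automaton.step w c c')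
    (h : Invariant w c'.2.1 (c'.2.2 2) (c'.2.2 1)) : Invariant w c.2.1 (c.2.2 2) (c.2.2 1) := by
  obtain ⟨i, q, θ⟩ := c
  obtain ⟨i', q', θ'⟩ := c'
  obtain ⟨-, -, hframe, act, hδ, hact⟩ := hs
  change Transition i (labelAt w (θ i)) (eqSet w 2 i θ) q q' act at hδ
  have hθ₂ : i = 1 → θ' 2 = θ 2 := fun hi => hframe 2 (by omega) (by omega)
  generalize hL : labelAt w (θ i) = L at hδ
  generalize hV : eqSet w 2 i θ = V at hδ
  cases hδ <;> dsimp only at hact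
  case start => simpa [Invariant, hact.2.1, eq_zero_of_labelAt_eq_leftMarker hL] using h
  case placeAlpha =>
    obtain ⟨-, -, h₂, h₁⟩ := hact
    exact mem_linc_of_alphaPending hL (by simpa [Invariant, h₂, h₁] using h)
  case startAlpha => simpa [Invariant, hact.2.1, hθ₂ rfl] using h
  case scanAlpha hnV =>
    rw [← hV, two_mem_eqSet_iff] at hnV
    exact alphaPending_of_scan hL hnV (by simpa [Invariant, hact.2.1, hθ₂ rfl] using h)
  case foundAlpha hmV =>
    rw [← hV, two_mem_eqSet_iff] at hmV
    exact alphaPending_of_found hL hmV (by simpa [Invariant, hθ₂ rfl] using h)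
  case nextAlpha => simpa [Invariant, hact.2.1] using h
  case placeBetaOfAlpha =>
    obtain ⟨-, -, h₂, h₁⟩ := hact
    exact betaBlock_subset (mem_betaBlock_of_betaPending hL (by simpa [Invariant, h₂, h₁] using h))
  case placeBeta =>
    obtain ⟨-, -, h₂, h₁⟩ := hact
    exact mem_betaBlock_of_betaPending hL (by simpa [Invariant, h₂, h₁] using h)
  case startBeta => simpa [Invariant, hact.2.1, hθ₂ rfl] using h
  case scanBeta hnV =>
    rw [← hV, two_mem_eqSet_iff] at hnV
    exact betaPending_of_scan hL hnV (by simpa [Invariant, hact.2.1, hθ₂ rfl] using h)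
  case endBeta =>
    refine ⟨by simp [drop_pred_eq_nil_of_labelAt_eq_rightMarker hL], ?_⟩
    simpa [Invariant, hθ₂ rfl] using h
  case nextBeta => simpa [Invariant, hact.2.1] using h
  case acceptAlpha =>
    change w.drop (θ 2 - 1) ∈ Linc D
    exact drop_pred_eq_nil_of_labelAt_eq_rightMarker hL ▸ nil_mem
  case acceptBeta =>
    change w.drop (θ 2 - 1) ∈ BetaBlock D
    exact drop_pred_eq_nil_of_labelAt_eq_rightMarker hL ▸ nil_mem_betaBlock

lemma invariant_of_leads {c : automaton.Config} (h : automaton.Leads w c) :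
    Invariant w c.2.1 (c.2.2 2) (c.2.2 1) := by
  induction h with
  | final hF => rw [Set.mem_singleton_iff.1 hF]; trivial
  | univ hU => exact absurd hU (Set.notMem_empty _)
  | exist _ _ hs _ ih => exact invariant_of_step hs ih

theorem lang_subset_linc : automaton.Lang D ⊆ Linc D :=
  fun _ hw => invariant_of_leads hw

end Soundness

end LincAutomaton

/-- `L_inc` is accepted by a weak 2-pebble automaton; moreover every
word in `L_inc` satisfies `m ≤ n` (the `α`-block is no longer than the `β`-block). -/
theorem Linc_accepted_by_weak2PA_and_length_le (D : Type) :
    (∃ A : WeakPA Bool 2, A.Lang D = Linc D) ∧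
    (∀ u v : List D, u.Nodup → v.Nodup → (∀ a ∈ u, a ∈ v) → u.length ≤ v.length) :=
  ⟨⟨LincAutomaton.automaton,
      LincAutomaton.lang_subset_linc.antisymm LincAutomaton.linc_subset_lang⟩,
    fun _ _ hu _ huv => (hu.subperm huv).length_le⟩
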